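/- arXiv:2104.11955 — 10 statements merged into one kernel-verified Lean document; each statement's English description precedes it below -/
import Mathlib

section
/- For any two structures 𝔄 and 𝔅 over a first-order language L and any homomorphism h : 𝔄 → 𝔅, there exist an L-structure ℭ, an injective homomorphism h₁ : 𝔄 → ℭ, and a strong surjective homomorphism h₂ : ℭ → 𝔅 such that h = h₂ ∘ h₁. -/
/-! Take `C = M ⊕ N`, with `M` embedded by `Sum.inl` and `C` mapped onto `N` by `Sum.elim h id`.
Declaring a relation to hold on a tuple of `C` exactly when it holds on its image in `N` makes the
retraction strong, and `Sum.inl` a homomorphism because `h` is one. A function symbol is evaluated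
in `M` on tuples from `M` and in `N` on all other tuples, which makes both maps compatible with
function symbols. -/

open FirstOrder FirstOrder.Language

universe u v w

/-- A homomorphism of `L`-structures is *strong* if it both preserves and reflects all
relations, i.e. `R^𝔄(a⃗) ⟺ R^𝔅(h(a⃗))` for every relation symbol `R` and tuple `a⃗`. -/
def IsStrongHom {L : FirstOrder.Language.{v, w}} {M : Type*} {N : Type*}
    [L.Structure M] [L.Structure N] (h : M →[L] N) : Prop :=
  ∀ ⦃n : ℕ⦄ (r : L.Relations n) (x : Fin n → M),
    Structure.RelMap r (⇑h ∘ x) ↔ Structure.RelMap r x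

namespace FirstOrder.Language.Hom

variable {L : Language.{v, w}} {M N : Type*} [L.Structure M] [L.Structure N]

@[nolint unusedArguments]
def Cylinder (_ : M →[L] N) : Type _ := M ⊕ N

variable (h : M →[L] N)

-- `Hom.id` is in scope here, hence `_root_.id`.
noncomputable instance : L.Structure h.Cylinder where
  funMap f := Function.extend (Sum.inl ∘ ·) (fun y ↦ Sum.inl (Structure.funMap f y))
    (fun x ↦ Sum.inr (Structure.funMap f (Sum.elim h _root_.id ∘ x)))
  RelMap r x := Structure.RelMap r (Sum.elim h _root_.id ∘ x)

instance [Nonempty N] : Nonempty h.Cylinder := inferInstanceAs (Nonempty (M ⊕ N))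

namespace Cylinder

lemma funMap_inl {n : ℕ} (f : L.Functions n) (y : Fin n → M) :
    Structure.funMap (M := h.Cylinder) f (Sum.inl ∘ y) = Sum.inl (Structure.funMap f y) :=
  Sum.inl_injective.comp_left.extend_apply _ _ y

lemma funMap_of_not_inl {n : ℕ} (f : L.Functions n) (x : Fin n → h.Cylinder)
    (hx : ¬∃ y : Fin n → M, Sum.inl ∘ y = x) :
    Structure.funMap f x = Sum.inr (Structure.funMap f (Sum.elim h _root_.id ∘ x)) :=
  Function.extend_apply' _ _ x hx

def inl : M →[L] h.Cylinder where
  toFun := Sum.inl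
  map_fun' f y := (funMap_inl h f y).symm
  map_rel' r y hy := h.map_rel r y hy

def retract : h.Cylinder →[L] N where
  toFun := Sum.elim h _root_.id
  map_fun' f x := by
    by_cases hx : ∃ y : Fin _ → M, Sum.inl ∘ y = x
    · obtain ⟨y, rfl⟩ := hx
      exact (congrArg (Sum.elim h _root_.id) (funMap_inl h f y)).trans (h.map_fun f y)
    · rw [funMap_of_not_inl h f x hx]
      rfl
  map_rel' _ _ := _root_.id

lemma inl_injective : Function.Injective (inl h) := Sum.inl_injective

lemma isStrongHom_retract : IsStrongHom (retract h) := fun _ _ _ ↦ Iff.rfl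

lemma retract_surjective : Function.Surjective (retract h) := fun b ↦ ⟨Sum.inr b, rfl⟩

lemma retract_inl (a : M) : retract h (inl h a) = h a := rfl

end Cylinder

end FirstOrder.Language.Hom

theorem hom_factors_as_injective_then_strong_surjective_general
    (L : FirstOrder.Language.{v, w})
    (M N : Type u) [L.Structure M] [L.Structure N] [Nonempty N]
    (h : M →[L] N) :
    ∃ (C : Type u) (_ : L.Structure C) (_ : Nonempty C)
      (h₁ : M →[L] C) (h₂ : C →[L] N),
      Function.Injective h₁ ∧
      IsStrongHom h₂ ∧ Function.Surjective h₂ ∧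
      ∀ a : M, h a = h₂ (h₁ a) :=
  ⟨h.Cylinder, inferInstance, inferInstance, Hom.Cylinder.inl h, Hom.Cylinder.retract h,
    Hom.Cylinder.inl_injective h, Hom.Cylinder.isStrongHom_retract h,
    Hom.Cylinder.retract_surjective h, fun a ↦ (Hom.Cylinder.retract_inl h a).symm⟩

/-- Over a language with only relation and constant symbols, every
homomorphism `h : 𝔄 → 𝔅` between (nonempty) structures factors as a strong surjective
homomorphism following an injective homomorphism. -/
theorem hom_factors_as_injective_then_strong_surjective
    (L : FirstOrder.Language.{v, w}) (hL : ∀ n : ℕ, IsEmpty (L.Functions (n + 1)))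
    (M N : Type u) [L.Structure M] [L.Structure N] [Nonempty M] [Nonempty N]
    (h : M →[L] N) :
    ∃ (C : Type u) (_ : L.Structure C) (_ : Nonempty C)
      (h₁ : M →[L] C) (h₂ : C →[L] N),
      Function.Injective h₁ ∧
      IsStrongHom h₂ ∧ Function.Surjective h₂ ∧
      ∀ a : M, h a = h₂ (h₁ a) :=
  hom_factors_as_injective_then_strong_surjective_general L M N h
end

section
/- Let Φ be a first-order L-sentence. There exist structures 𝔄 ⊨ Φ and 𝔅 ⊭ Φ with a homomorphism from 𝔄 to 𝔅 (i.e., Φ has a spoiler, equivalently the class of models of Φ is not closed under homomorphisms) if and only if Φ has an injective spoiler or Φ has a strong surjective spoiler. -/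
/-!
Every homomorphism `h : A → B` factors as
`A → A' → h(A) → B`, where `A'` is `A` with the relations pulled back along `h`:
the first and last maps are injective and the middle one is strong and surjective.
Since `Φ` holds at the start of this chain and fails at its end, it fails for the first
time at one of the three steps, which is then an injective or a strong surjective spoiler.
-/

open FirstOrder FirstOrder.Language

universe u v w

/-- `Φ` has a spoiler: a homomorphism from a model of `Φ` to a non-model of `Φ`. -/
def HasSpoiler.{u', v', w'} (L : FirstOrder.Language.{v', w'}) (Φ : L.Sentence) : Prop :=
  ∃ (A : Type u') (_ : L.Structure A) (_ : Nonempty A)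
    (B : Type u') (_ : L.Structure B) (_ : Nonempty B),
    A ⊨ Φ ∧ ¬ B ⊨ Φ ∧ Nonempty (A →[L] B)

/-- `Φ` has an injective spoiler. -/
def HasInjectiveSpoiler.{u', v', w'} (L : FirstOrder.Language.{v', w'}) (Φ : L.Sentence) :
    Prop :=
  ∃ (A : Type u') (_ : L.Structure A) (_ : Nonempty A)
    (B : Type u') (_ : L.Structure B) (_ : Nonempty B),
    A ⊨ Φ ∧ ¬ B ⊨ Φ ∧ ∃ h : A →[L] B, Function.Injective h

/-- `Φ` has a strong surjective spoiler. -/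
def HasStrongSurjectiveSpoiler.{u', v', w'} (L : FirstOrder.Language.{v', w'})
    (Φ : L.Sentence) : Prop :=
  ∃ (A : Type u') (_ : L.Structure A) (_ : Nonempty A)
    (B : Type u') (_ : L.Structure B) (_ : Nonempty B),
    A ⊨ Φ ∧ ¬ B ⊨ Φ ∧ ∃ h : A →[L] B, IsStrongHom h ∧ Function.Surjective h

namespace FirstOrder.Language.Hom

variable {L : FirstOrder.Language.{v, w}} {A B : Type*} [L.Structure A] [L.Structure B]

def RelComap (_h : A →[L] B) : Type _ := A

instance (h : A →[L] B) : L.Structure h.RelComap where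
  funMap f x := (Structure.funMap f x : A)
  RelMap r x := Structure.RelMap r (h ∘ (x : Fin _ → A))

instance (h : A →[L] B) [Nonempty A] : Nonempty h.RelComap := ‹Nonempty A›

def toRelComap (h : A →[L] B) : A →[L] h.RelComap where
  toFun a := a
  map_rel' r x hx := h.map_rel r x hx

theorem toRelComap_injective (h : A →[L] B) : Function.Injective h.toRelComap :=
  fun _ _ hab => hab

def relComapToRange (h : A →[L] B) : h.RelComap →[L] h.range where
  toFun a := ⟨h a, a, rfl⟩
  map_fun' f x := Subtype.ext (h.map_fun f x)
  map_rel' _ _ hx := hx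

theorem isStrongHom_relComapToRange (h : A →[L] B) : IsStrongHom h.relComapToRange :=
  fun _ _ _ => Iff.rfl

theorem relComapToRange_surjective (h : A →[L] B) :
    Function.Surjective h.relComapToRange := by
  rintro ⟨_, a, rfl⟩
  exact ⟨a, rfl⟩

instance (h : A →[L] B) [Nonempty A] : Nonempty h.range :=
  ⟨h.relComapToRange (Classical.arbitrary _)⟩

end FirstOrder.Language.Hom

section Spoilers

variable {L : FirstOrder.Language.{v, w}} {Φ : L.Sentence} {A : Type u} {B : Type u}
  [L.Structure A] [L.Structure B] [Nonempty A] [Nonempty B]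

theorem HasInjectiveSpoiler.mk (hA : A ⊨ Φ) (hB : ¬ B ⊨ Φ) (h : A →[L] B)
    (h_inj : Function.Injective h) : HasInjectiveSpoiler.{u} L Φ :=
  ⟨A, _, ‹_›, B, _, ‹_›, hA, hB, h, h_inj⟩

theorem HasStrongSurjectiveSpoiler.mk (hA : A ⊨ Φ) (hB : ¬ B ⊨ Φ) (h : A →[L] B)
    (h_strong : IsStrongHom h) (h_surj : Function.Surjective h) :
    HasStrongSurjectiveSpoiler.{u} L Φ :=
  ⟨A, _, ‹_›, B, _, ‹_›, hA, hB, h, h_strong, h_surj⟩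

theorem hasInjectiveSpoiler_or_hasStrongSurjectiveSpoiler_of_hom (hA : A ⊨ Φ)
    (hB : ¬ B ⊨ Φ) (h : A →[L] B) :
    HasInjectiveSpoiler.{u} L Φ ∨ HasStrongSurjectiveSpoiler.{u} L Φ := by
  by_cases h_range : h.range ⊨ Φ
  · exact .inl (.mk h_range hB h.range.subtype.toHom Subtype.coe_injective)
  by_cases h_comap : h.RelComap ⊨ Φ
  · exact .inr (.mk h_comap h_range h.relComapToRange h.isStrongHom_relComapToRange
      h.relComapToRange_surjective)
  · exact .inl (.mk hA h_comap h.toRelComap h.toRelComap_injective)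

theorem HasInjectiveSpoiler.hasSpoiler (hΦ : HasInjectiveSpoiler.{u} L Φ) : HasSpoiler.{u} L Φ :=
  let ⟨A, iA, nA, B, iB, nB, hA, hB, h, _⟩ := hΦ
  ⟨A, iA, nA, B, iB, nB, hA, hB, ⟨h⟩⟩

theorem HasStrongSurjectiveSpoiler.hasSpoiler (hΦ : HasStrongSurjectiveSpoiler.{u} L Φ) :
    HasSpoiler.{u} L Φ :=
  let ⟨A, iA, nA, B, iB, nB, hA, hB, h, _⟩ := hΦ
  ⟨A, iA, nA, B, iB, nB, hA, hB, ⟨h⟩⟩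

end Spoilers

theorem hasSpoiler_iff_injective_or_strongSurjective_general
    (L : FirstOrder.Language.{v, w})
    (Φ : L.Sentence) :
    HasSpoiler.{u, v, w} L Φ ↔
      HasInjectiveSpoiler.{u, v, w} L Φ ∨ HasStrongSurjectiveSpoiler.{u, v, w} L Φ := by
  constructor
  · rintro ⟨A, _, _, B, _, _, hA, hB, ⟨h⟩⟩
    exact hasInjectiveSpoiler_or_hasStrongSurjectiveSpoiler_of_hom hA hB h
  · rintro (hΦ | hΦ)
    exacts [hΦ.hasSpoiler, hΦ.hasSpoiler]

/-- A first-order sentence (over a language with only relation and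
constant symbols) has a spoiler iff it has an injective spoiler or a strong surjective
spoiler. -/
theorem hasSpoiler_iff_injective_or_strongSurjective
    (L : FirstOrder.Language.{v, w}) (hL : ∀ n : ℕ, IsEmpty (L.Functions (n + 1)))
    (Φ : L.Sentence) :
    HasSpoiler.{u, v, w} L Φ ↔
      HasInjectiveSpoiler.{u, v, w} L Φ ∨ HasStrongSurjectiveSpoiler.{u, v, w} L Φ :=
  hasSpoiler_iff_injective_or_strongSurjective_general L Φ
end

section
/- Let Φ be a first-order L-sentence. There exist finite structures 𝔄 ⊨ Φ and 𝔅 ⊭ Φ with a homomorphism from 𝔄 to 𝔅 (i.e., Φ has a finite spoiler, equivalently the class of finite models of Φ is not closed under homomorphisms with finite targets) if and only if Φ has a finite injective spoiler or Φ has a finite strong surjective spoiler. -/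
open FirstOrder FirstOrder.Language

universe u v w

/-- `Φ` has a finite spoiler: a homomorphism from a finite model of `Φ` to a finite
non-model of `Φ`. -/
def HasFiniteSpoiler.{u', v', w'} (L : FirstOrder.Language.{v', w'}) (Φ : L.Sentence) :
    Prop :=
  ∃ (A : Type u') (_ : L.Structure A) (_ : Nonempty A) (_ : Finite A)
    (B : Type u') (_ : L.Structure B) (_ : Nonempty B) (_ : Finite B),
    A ⊨ Φ ∧ ¬ B ⊨ Φ ∧ Nonempty (A →[L] B)

/-- `Φ` has a finite injective spoiler. -/
def HasFiniteInjectiveSpoiler.{u', v', w'} (L : FirstOrder.Language.{v', w'})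
    (Φ : L.Sentence) : Prop :=
  ∃ (A : Type u') (_ : L.Structure A) (_ : Nonempty A) (_ : Finite A)
    (B : Type u') (_ : L.Structure B) (_ : Nonempty B) (_ : Finite B),
    A ⊨ Φ ∧ ¬ B ⊨ Φ ∧ ∃ h : A →[L] B, Function.Injective h

/-- `Φ` has a finite strong surjective spoiler. -/
def HasFiniteStrongSurjectiveSpoiler.{u', v', w'} (L : FirstOrder.Language.{v', w'})
    (Φ : L.Sentence) : Prop :=
  ∃ (A : Type u') (_ : L.Structure A) (_ : Nonempty A) (_ : Finite A)
    (B : Type u') (_ : L.Structure B) (_ : Nonempty B) (_ : Finite B),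
    A ⊨ Φ ∧ ¬ B ⊨ Φ ∧ ∃ h : A →[L] B, IsStrongHom h ∧ Function.Surjective h

/-!
Given a homomorphism `h : 𝔄 → 𝔅`, put on the disjoint union `𝔄 ⊔ 𝔅` the structure pulled back
along `[h, id] : 𝔄 ⊔ 𝔅 → 𝔅`, interpreting each constant as in `𝔄`. Then `h` factors as the
injective homomorphism `inl : 𝔄 → 𝔄 ⊔ 𝔅` followed by the strong surjective homomorphism
`[h, id]`. If `h` is a spoiler, `𝔄 ⊔ 𝔅` either satisfies `Φ`, making the second factor a
spoiler, or it does not, making the first one a spoiler. Constants are the only function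
symbols that the pulled-back structure can interpret.
-/

namespace FirstOrder.Language

section Factorization

variable {L : Language.{v, w}} {A B C : Type*} [L.Structure A] [L.Structure B]

abbrev Structure.factorization (hL : ∀ n, IsEmpty (L.Functions (n + 1))) (s : A → C)
    (g : C → B) : L.Structure C where
  funMap {n} f _ :=
    match n, f with
    | 0, c => s (Structure.funMap c finZeroElim)
    | n + 1, f => (hL n).elim f
  RelMap r x := Structure.RelMap r (g ∘ x)

variable (hL : ∀ n, IsEmpty (L.Functions (n + 1))) (h : A →[L] B) {s : A → C} {g : C → B}
  (hgs : ∀ a, g (s a) = h a)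

def Hom.factorLeft : @Hom L A C _ (Structure.factorization hL s g) :=
  let _ := Structure.factorization hL s g
  { toFun := s
    map_fun' := fun {n} f x =>
      match n, f with
      | 0, c => congrArg (fun x => s (Structure.funMap c x)) (Subsingleton.elim _ _)
      | n + 1, f => (hL n).elim f
    map_rel' := fun r x hr => by
      change Structure.RelMap r (g ∘ s ∘ x)
      simpa only [Function.comp_def, hgs] using h.map_rel r x hr }

def Hom.factorRight : @Hom L C B (Structure.factorization hL s g) _ :=
  let _ := Structure.factorization hL s g
  { toFun := g
    map_fun' := fun {n} f x =>
      match n, f with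
      | 0, c => by
        change g (s _) = _
        rw [hgs, h.map_fun]
        exact congrArg _ (Subsingleton.elim _ _)
      | n + 1, f => (hL n).elim f
    map_rel' := fun _ _ hr => hr }

theorem Hom.isStrongHom_factorRight :
    @IsStrongHom L C B (Structure.factorization hL s g) _ (Hom.factorRight hL h hgs) :=
  fun _ _ _ => Iff.rfl

end Factorization

theorem HasFiniteInjectiveSpoiler.hasFiniteSpoiler {L : Language.{v, w}} {Φ : L.Sentence}
    (hΦ : HasFiniteInjectiveSpoiler.{u} L Φ) : HasFiniteSpoiler.{u} L Φ :=
  let ⟨A, _, hA, _, B, _, hB, _, hAΦ, hBΦ, h, _⟩ := hΦ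
  ⟨A, _, hA, inferInstance, B, _, hB, inferInstance, hAΦ, hBΦ, ⟨h⟩⟩

theorem HasFiniteStrongSurjectiveSpoiler.hasFiniteSpoiler {L : Language.{v, w}}
    {Φ : L.Sentence} (hΦ : HasFiniteStrongSurjectiveSpoiler.{u} L Φ) :
    HasFiniteSpoiler.{u} L Φ :=
  let ⟨A, _, hA, _, B, _, hB, _, hAΦ, hBΦ, h, _⟩ := hΦ
  ⟨A, _, hA, inferInstance, B, _, hB, inferInstance, hAΦ, hBΦ, ⟨h⟩⟩

end FirstOrder.Language

/-- A first-order sentence (over a language with only relation and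
constant symbols) has a finite spoiler iff it has a finite injective spoiler or a finite
strong surjective spoiler. -/
theorem hasFiniteSpoiler_iff_injective_or_strongSurjective
    (L : FirstOrder.Language.{v, w}) (hL : ∀ n : ℕ, IsEmpty (L.Functions (n + 1)))
    (Φ : L.Sentence) :
    HasFiniteSpoiler.{u, v, w} L Φ ↔
      HasFiniteInjectiveSpoiler.{u, v, w} L Φ ∨
        HasFiniteStrongSurjectiveSpoiler.{u, v, w} L Φ := by
  refine ⟨fun ⟨A, _, _, _, B, _, _, _, hA, hB, ⟨h⟩⟩ => ?_,
    fun hΦ => hΦ.elim (·.hasFiniteSpoiler) (·.hasFiniteSpoiler)⟩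
  let _ := Structure.factorization hL (Sum.inl : A → A ⊕ B) (Sum.elim h id)
  have hfac : ∀ a : A, Sum.elim h id (Sum.inl a) = h a := fun _ => rfl
  by_cases hC : (A ⊕ B) ⊨ Φ
  · exact .inr ⟨A ⊕ B, _, inferInstance, inferInstance, B, _, inferInstance, inferInstance,
      hC, hB, Hom.factorRight hL h hfac, Hom.isStrongHom_factorRight hL h hfac,
      fun b => ⟨.inr b, rfl⟩⟩
  · exact .inl ⟨A, _, inferInstance, inferInstance, A ⊕ B, _, inferInstance, inferInstance,
      hA, hC, Hom.factorLeft hL h hfac, Sum.inl_injective⟩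
end

section
/- Let 𝔄₀ and 𝔅 be finite L-structures and h : 𝔄₀ → 𝔅 a strong surjective homomorphism. Then there exist m ∈ ℕ, finite L-structures 𝔄₁, …, 𝔄ₘ, monomerges hᵢ : 𝔄ᵢ₋₁ → 𝔄ᵢ for 1 ≤ i ≤ m, and an isomorphism g : 𝔄ₘ → 𝔅 such that h = g ∘ hₘ ∘ ⋯ ∘ h₁. -/
open FirstOrder FirstOrder.Language

universe u v w

/-- A *monomerge* is a strong surjective homomorphism such that exactly one element of the
codomain has a two-element preimage and every other element has a one-element preimage. -/
def IsMonomerge {L : FirstOrder.Language.{v, w}} {M : Type*} {N : Type*}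
    [L.Structure M] [L.Structure N] (h : M →[L] N) : Prop :=
  IsStrongHom h ∧ Function.Surjective h ∧
    ∃ b : N, (⇑h ⁻¹' {b}).ncard = 2 ∧ ∀ b' : N, b' ≠ b → (⇑h ⁻¹' {b'}).ncard = 1

/-- `MonomergeFactorization L m A B SA SB f` says that the map `f : A → B` can be written
as `g ∘ hₘ ∘ ⋯ ∘ h₁` for monomerges `h₁, …, hₘ` between finite nonempty `L`-structures and
an isomorphism `g`. -/
def MonomergeFactorization (L : FirstOrder.Language.{v, w}) :
    ℕ → ∀ (A B : Type u), L.Structure A → L.Structure B → (A → B) → Prop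
  | 0, A, B, SA, SB, f => ∃ g : A ≃[L] B, ∀ a : A, f a = g a
  | m + 1, A, B, SA, SB, f =>
      ∃ (C : Type u) (SC : L.Structure C) (_ : Nonempty C) (_ : Finite C)
        (h₁ : A →[L] C) (f' : C → B),
        IsMonomerge h₁ ∧ (∀ a : A, f a = f' (h₁ a)) ∧
          MonomergeFactorization L m C B SC SB f'

namespace IsStrongHom

variable {L : FirstOrder.Language.{v, w}} {M N : Type u} [SM : L.Structure M] [SN : L.Structure N]
  {h : M →[L] N}

theorem monomergeFactorization_zero (hst : IsStrongHom h) (hbij : Function.Bijective h) :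
    MonomergeFactorization L 0 M N SM SN h :=
  ⟨⟨Equiv.ofBijective h hbij, h.map_fun, fun r x => hst r x⟩, fun _ => rfl⟩

end IsStrongHom

/-- `M` with `a'` merged into `a`, carrying the relations pulled back from `N` along `h`. -/
abbrev Merge {L : FirstOrder.Language.{v, w}} {M N : Type*} [L.Structure M] [L.Structure N]
    (_ : M →[L] N) {a a' : M} (_ : a ≠ a') : Type _ :=
  {y : M // y ≠ a'}

namespace Merge

variable {L : FirstOrder.Language.{v, w}} {M N : Type*} [L.Structure M] [L.Structure N]
  (h : M →[L] N) {a a' : M} (hne : a ≠ a')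

instance [Finite M] : Finite (Merge h hne) := Subtype.finite

theorem card_lt [Finite M] : Nat.card (Merge h hne) < Nat.card M :=
  Finite.card_subtype_lt (x := a') fun hx => hx rfl

open Classical in
noncomputable def proj (x : M) : Merge h hne :=
  if hx : x = a' then ⟨a, hne⟩ else ⟨x, hx⟩

noncomputable instance : L.Structure (Merge h hne) where
  funMap f v := proj h hne (Structure.funMap f (Subtype.val ∘ v))
  RelMap r v := Structure.RelMap r (h ∘ Subtype.val ∘ v)

variable {h hne}

open Classical in
theorem val_proj (x : M) : (proj h hne x).val = if x = a' then a else x := by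
  by_cases hx : x = a' <;> simp [proj, hx]

theorem proj_surjective : Function.Surjective (proj h hne) := fun c =>
  ⟨c.val, Subtype.ext <| by rw [val_proj, if_neg c.2]⟩

theorem apply_proj_val (haa : h a = h a') (x : M) : h (proj h hne x).val = h x := by
  rw [val_proj]
  split_ifs with hx
  · rw [hx, haa]
  · rfl

theorem preimage_proj_eq_pair : proj h hne ⁻¹' {⟨a, hne⟩} = {a, a'} := by
  ext x
  simp only [Set.mem_preimage, Set.mem_singleton_iff, Set.mem_insert_iff]
  rw [← Subtype.val_inj, val_proj]
  split_ifs with hx <;> simp [hx]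

theorem preimage_proj_eq_singleton {c : Merge h hne} (hc : c.val ≠ a) :
    proj h hne ⁻¹' {c} = {c.val} := by
  ext x
  simp only [Set.mem_preimage, Set.mem_singleton_iff]
  rw [← Subtype.val_inj, val_proj]
  split_ifs with hx
  · exact iff_of_false (Ne.symm hc) fun hxc => c.2 (hxc.symm.trans hx)
  · rfl

theorem relMap_comp_proj (haa : h a = h a') {n : ℕ} (r : L.Relations n) (x : Fin n → M) :
    Structure.RelMap r (proj h hne ∘ x) ↔ Structure.RelMap r (h ∘ x) := by
  change Structure.RelMap r (h ∘ Subtype.val ∘ proj h hne ∘ x) ↔ _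
  rw [show h ∘ Subtype.val ∘ proj h hne ∘ x = h ∘ x from funext fun i => apply_proj_val haa (x i)]

noncomputable def projHom (hL : ∀ n : ℕ, IsEmpty (L.Functions (n + 1))) (haa : h a = h a') :
    M →[L] Merge h hne where
  toFun := proj h hne
  map_fun' {n} f x := by
    cases n with
    | zero => exact congrArg (proj h hne ∘ Structure.funMap f) (Subsingleton.elim _ _)
    | succ n => exact (hL n).elim f
  map_rel' r x hx := (relMap_comp_proj haa r x).mpr (h.map_rel r x hx)

noncomputable def lift (haa : h a = h a') : Merge h hne →[L] N where
  toFun c := h c.val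
  map_fun' f v := by
    change h (proj h hne _).val = _
    rw [apply_proj_val haa, h.map_fun]
    rfl

theorem lift_proj (haa : h a = h a') (x : M) : lift haa (proj h hne x) = h x :=
  apply_proj_val haa x

theorem isStrongHom_lift (haa : h a = h a') : IsStrongHom (lift (hne := hne) haa) :=
  fun _ _ _ => Iff.rfl

theorem lift_surjective (haa : h a = h a') (hsurj : Function.Surjective h) :
    Function.Surjective (lift (hne := hne) haa) := fun y =>
  (hsurj y).elim fun x hx => ⟨proj h hne x, (lift_proj haa x).trans hx⟩

theorem isMonomerge_projHom (hL : ∀ n : ℕ, IsEmpty (L.Functions (n + 1))) (haa : h a = h a')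
    (hst : IsStrongHom h) : IsMonomerge (projHom (hne := hne) hL haa) := by
  refine ⟨fun _ r x => (relMap_comp_proj haa r x).trans (hst r x), proj_surjective,
    ⟨a, hne⟩, ?_, fun c hc => ?_⟩
  · change (proj h hne ⁻¹' _).ncard = 2
    rw [preimage_proj_eq_pair, Set.ncard_pair hne]
  · change (proj h hne ⁻¹' _).ncard = 1
    rw [preimage_proj_eq_singleton fun hca => hc (Subtype.ext hca), Set.ncard_singleton]

end Merge

theorem Merge.monomergeFactorization_succ {L : FirstOrder.Language.{v, w}} {M N : Type u}
    [SM : L.Structure M] [SN : L.Structure N] [Finite M] {h : M →[L] N} {a a' : M}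
    {hne : a ≠ a'} (hL : ∀ n : ℕ, IsEmpty (L.Functions (n + 1))) (hst : IsStrongHom h)
    (haa : h a = h a') {m : ℕ}
    (hm : MonomergeFactorization L m (Merge h hne) N inferInstance SN (lift haa)) :
    MonomergeFactorization L (m + 1) M N SM SN h :=
  ⟨Merge h hne, inferInstance, ⟨⟨a, hne⟩⟩, inferInstance, projHom hL haa, lift haa,
    isMonomerge_projHom hL haa hst, fun x => (lift_proj haa x).symm, hm⟩

theorem strong_surjective_hom_factors_through_monomerges_general
    (L : FirstOrder.Language.{v, w}) (hL : ∀ n : ℕ, IsEmpty (L.Functions (n + 1)))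
    (M N : Type u) [SM : L.Structure M] [SN : L.Structure N]
    [Finite M]
    (h : M →[L] N) (hst : IsStrongHom h) (hsurj : Function.Surjective h) :
    ∃ m : ℕ, MonomergeFactorization L m M N SM SN ⇑h := by
  obtain ⟨n, hn⟩ : ∃ n, Nat.card M = n := ⟨_, rfl⟩
  induction n using Nat.strong_induction_on generalizing M with
  | _ n ih =>
    by_cases hinj : Function.Injective h
    · exact ⟨0, hst.monomergeFactorization_zero ⟨hinj, hsurj⟩⟩
    obtain ⟨a, a', haa, hne⟩ := Function.not_injective_iff.mp hinj
    obtain ⟨m, hm⟩ := ih _ (hn ▸ Merge.card_lt h hne) (Merge h hne) (Merge.lift haa)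
      (Merge.isStrongHom_lift haa) (Merge.lift_surjective haa hsurj) rfl
    exact ⟨m + 1, Merge.monomergeFactorization_succ hL hst haa hm⟩

/-- Every strong surjective homomorphism between finite (nonempty)
structures over a language with only relation and constant symbols factors, up to a final
isomorphism, as a composition of finitely many monomerges. -/
theorem strong_surjective_hom_factors_through_monomerges
    (L : FirstOrder.Language.{v, w}) (hL : ∀ n : ℕ, IsEmpty (L.Functions (n + 1)))
    (M N : Type u) [SM : L.Structure M] [SN : L.Structure N]
    [Nonempty M] [Nonempty N] [Finite M] [Finite N]
    (h : M →[L] N) (hst : IsStrongHom h) (hsurj : Function.Surjective h) :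
    ∃ m : ℕ, MonomergeFactorization L m M N SM SN ⇑h :=
  strong_surjective_hom_factors_through_monomerges_general L hL M N (SM := SM) (SN := SN) h hst
    hsurj
end

section
/- Let L ⊆ L′ ⊆ L″ be first-order languages such that L′ extends L by relation symbols only (no new constant symbols). Let Φ be an L-sentence, Φ′ an L′-sentence, and Ψ an L″-sentence such that: (a) an L-structure is a model of Φ if and only if it admits an L′-expansion that is a model of Φ′; and (b) an L′-structure belongs to homcl(Mod(Φ′)) if and only if it admits an L″-expansion that is a model of Ψ. Then an L-structure belongs to homcl(Mod(Φ)) if and only if it admits an L″-expansion that is a model of Ψ. -/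
/-!
An `L″`-expansion of `M` modelling `Ψ` reducts to an `L′`-expansion, which by (b) receives a
homomorphism from a model `A` of `Φ′`; reducting `A` and the homomorphism to `L` gives, by (a),
a model of `Φ` mapping to `M`. Conversely, a model `A` of `Φ` expands by (a) to a model of `Φ′`.
Since `L′` adds only relation symbols, an `L`-homomorphism `A → M` stays an `L′`-homomorphism
once every new relation is interpreted as true on `M`, and (b) yields the expansion modelling `Ψ`.
-/

open FirstOrder FirstOrder.Language

universe u v w

namespace FirstOrder.Language

variable {L L' L'' : Language}

instance LHom.comp_isExpansionOn (ψ : L' →ᴸ L'') (ϕ : L →ᴸ L') (M : Type*) [L.Structure M]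
    [L'.Structure M] [L''.Structure M] [ψ.IsExpansionOn M] [ϕ.IsExpansionOn M] :
    (ψ.comp ϕ).IsExpansionOn M :=
  ⟨fun f x => by simp [LHom.comp_onFunction], fun r x => by simp [LHom.comp_onRelation]⟩

theorem LHom.IsExpansionOn.of_comp (ψ : L' →ᴸ L'') (ϕ : L →ᴸ L') (M : Type*) [L.Structure M]
    [L'.Structure M] [L''.Structure M] [ψ.IsExpansionOn M] [(ψ.comp ϕ).IsExpansionOn M] :
    ϕ.IsExpansionOn M where
  map_onFunction f x := by
    rw [← ψ.map_onFunction, ← LHom.comp_onFunction, (ψ.comp ϕ).map_onFunction]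
  map_onRelation r x := by
    rw [← ψ.map_onRelation, ← LHom.comp_onRelation, (ψ.comp ϕ).map_onRelation]

def Hom.reduct (ϕ : L →ᴸ L') {M N : Type*} [L.Structure M] [L'.Structure M] [L.Structure N]
    [L'.Structure N] [ϕ.IsExpansionOn M] [ϕ.IsExpansionOn N] (f : M →[L'] N) : M →[L] N where
  toFun := f
  map_fun' g x := by simpa using f.map_fun (ϕ.onFunction g) x
  map_rel' r x hr := by simpa using f.map_rel (ϕ.onRelation r) x (by simpa using hr)

abbrev topRelStructure (L : Language) [L.IsRelational] (M : Type*) : L.Structure M where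
  funMap f := isEmptyElim f
  RelMap _ _ := True

def Hom.sumInlOfRelMapTrue {Lr : Language} [Lr.IsRelational] {A M : Type*} [L.Structure A]
    [L.Structure M] [(L.sum Lr).Structure A] [(LHom.sumInl : L →ᴸ L.sum Lr).IsExpansionOn A]
    [Lr.Structure M] (hM : ∀ {n} (r : Lr.Relations n) (x : Fin n → M), Structure.RelMap r x)
    (f : A →[L] M) : A →[L.sum Lr] M where
  toFun := f
  map_fun' := by
    rintro n (g | g) x
    · simp [f.map_fun]
    · exact isEmptyElim g
  map_rel' := by
    rintro n (r | r) x hr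
    · exact f.map_rel r x ((LHom.sumInl : L →ᴸ L.sum Lr).map_onRelation r x ▸ hr)
    · exact hM r _

end FirstOrder.Language

theorem homclosure_projective_characterization_transfer_general
    (L Lr L2 : FirstOrder.Language.{v, w})
    (hLr : Lr.IsRelational)
    (Φ : L.Sentence) (Φ' : (L.sum Lr).Sentence) (Ψ : ((L.sum Lr).sum L2).Sentence)
    -- (a) an `L`-structure models `Φ` iff it admits an `L′`-expansion modelling `Φ′`
    (ha : ∀ (M : Type u) (SM : L.Structure M), Nonempty M →
      (M ⊨ Φ ↔ ∃ S' : (L.sum Lr).Structure M,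
        (LHom.sumInl : L →ᴸ L.sum Lr).IsExpansionOn M ∧ M ⊨ Φ'))
    -- (b) an `L′`-structure lies in `homcl (Mod Φ′)` iff it admits an `L″`-expansion
    -- modelling `Ψ`
    (hb : ∀ (M : Type u) (SM' : (L.sum Lr).Structure M), Nonempty M →
      ((∃ (A : Type u) (_ : (L.sum Lr).Structure A) (_ : Nonempty A),
          A ⊨ Φ' ∧ Nonempty (A →[L.sum Lr] M)) ↔
        ∃ S'' : ((L.sum Lr).sum L2).Structure M,
          (LHom.sumInl : L.sum Lr →ᴸ (L.sum Lr).sum L2).IsExpansionOn M ∧ M ⊨ Ψ)) :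
    -- conclusion: an `L`-structure lies in `homcl (Mod Φ)` iff it admits an
    -- `L″`-expansion modelling `Ψ`
    ∀ (M : Type u) (SM : L.Structure M), Nonempty M →
      ((∃ (A : Type u) (_ : L.Structure A) (_ : Nonempty A),
          A ⊨ Φ ∧ Nonempty (A →[L] M)) ↔
        ∃ S'' : ((L.sum Lr).sum L2).Structure M,
          ((LHom.sumInl : L.sum Lr →ᴸ (L.sum Lr).sum L2).comp
              (LHom.sumInl : L →ᴸ L.sum Lr)).IsExpansionOn M ∧ M ⊨ Ψ) := by
  intro M SM hM
  constructor
  · rintro ⟨A, SA, hA, hΦ, ⟨f⟩⟩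
    obtain ⟨SA', hexpA, hΦ'⟩ := (ha A SA hA).mp hΦ
    let : Lr.Structure M := topRelStructure Lr M
    obtain ⟨S'', hexpM, hΨ⟩ :=
      (hb M _ hM).mp ⟨A, SA', hA, hΦ', ⟨f.sumInlOfRelMapTrue fun _ _ => trivial⟩⟩
    exact ⟨S'', inferInstance, hΨ⟩
  · rintro ⟨S'', hexpM, hΨ⟩
    let SM' := (LHom.sumInl : L.sum Lr →ᴸ (L.sum Lr).sum L2).reduct M
    have := LHom.IsExpansionOn.of_comp (LHom.sumInl : L.sum Lr →ᴸ (L.sum Lr).sum L2) LHom.sumInl M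
    obtain ⟨A, SA', hA, hΦ', ⟨f⟩⟩ :=
      (hb M SM' hM).mpr ⟨S'', LHom.isExpansionOn_reduct _ M, hΨ⟩
    let SA := (LHom.sumInl : L →ᴸ L.sum Lr).reduct A
    have hΦ : A ⊨ Φ := (ha A SA hA).mpr ⟨SA', LHom.isExpansionOn_reduct _ A, hΦ'⟩
    exact ⟨A, SA, hA, hΦ, ⟨f.reduct LHom.sumInl⟩⟩

/-- projective normal form sufficiency. Let `L′ = L ⊕ Lr` extend `L` by
relation symbols only, and `L″ = L′ ⊕ L2` extend `L′` further. Suppose `Φ` (over `L`) is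
projectively characterized by `Φ′` (over `L′`), and the homomorphism closure of the models
of `Φ′` is projectively characterized by `Ψ` (over `L″`). Then the homomorphism closure
of the models of `Φ` is projectively characterized by `Ψ` as well. -/
theorem homclosure_projective_characterization_transfer
    (L Lr L2 : FirstOrder.Language.{v, w})
    (hL : ∀ n : ℕ, IsEmpty (L.Functions (n + 1)))
    (hLr : Lr.IsRelational)
    (Φ : L.Sentence) (Φ' : (L.sum Lr).Sentence) (Ψ : ((L.sum Lr).sum L2).Sentence)
    -- (a) an `L`-structure models `Φ` iff it admits an `L′`-expansion modelling `Φ′`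
    (ha : ∀ (M : Type u) (SM : L.Structure M), Nonempty M →
      (M ⊨ Φ ↔ ∃ S' : (L.sum Lr).Structure M,
        (LHom.sumInl : L →ᴸ L.sum Lr).IsExpansionOn M ∧ M ⊨ Φ'))
    -- (b) an `L′`-structure lies in `homcl (Mod Φ′)` iff it admits an `L″`-expansion
    -- modelling `Ψ`
    (hb : ∀ (M : Type u) (SM' : (L.sum Lr).Structure M), Nonempty M →
      ((∃ (A : Type u) (_ : (L.sum Lr).Structure A) (_ : Nonempty A),
          A ⊨ Φ' ∧ Nonempty (A →[L.sum Lr] M)) ↔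
        ∃ S'' : ((L.sum Lr).sum L2).Structure M,
          (LHom.sumInl : L.sum Lr →ᴸ (L.sum Lr).sum L2).IsExpansionOn M ∧ M ⊨ Ψ)) :
    -- conclusion: an `L`-structure lies in `homcl (Mod Φ)` iff it admits an
    -- `L″`-expansion modelling `Ψ`
    ∀ (M : Type u) (SM : L.Structure M), Nonempty M →
      ((∃ (A : Type u) (_ : L.Structure A) (_ : Nonempty A),
          A ⊨ Φ ∧ Nonempty (A →[L] M)) ↔
        ∃ S'' : ((L.sum Lr).sum L2).Structure M,
          ((LHom.sumInl : L.sum Lr →ᴸ (L.sum Lr).sum L2).comp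
              (LHom.sumInl : L →ᴸ L.sum Lr)).IsExpansionOn M ∧ M ⊨ Ψ) :=
  homclosure_projective_characterization_transfer_general L Lr L2 hLr Φ Φ' Ψ ha hb
end

section
/- Let L be a first-order language with equality whose function symbols are all constants (no function symbols of positive arity), with c constant symbols, and let Φ be an L-sentence of the form ∃x₁…∃x_m ∀y₁…∀y_n φ with φ quantifier-free. Then every (nonempty) model 𝔄 of Φ has a finite substructure 𝔄′ that is again a model of Φ, where 𝔄′ contains the interpretations of all constant symbols and has at most max(1, m + c) elements; in particular the inclusion is a homomorphism 𝔄′ → 𝔄. -/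
open FirstOrder FirstOrder.Language

universe u v w

/-!
Fix witnesses `x⃗ ∈ 𝔄` for the existential block. Since every function symbol is a constant,
the witnesses together with the constants (plus one arbitrary element, should both be absent)
already form a substructure, of size at most `max 1 (m + c)`. The matrix `∀y⃗ φ(x⃗, y⃗)` is
universal, and universal formulas pass from a structure to its substructures, so the same
witnesses work there.
-/

/-- Universally quantify the last `n` bound variables of a bounded formula. -/
def BoundedFormula.allsAbove {L : FirstOrder.Language.{v, w}} {α : Type*} {k : ℕ} :
    ∀ {n : ℕ}, L.BoundedFormula α (k + n) → L.BoundedFormula α k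
  | 0, φ => φ
  | _ + 1, φ => BoundedFormula.allsAbove φ.all

theorem Set.Finite.exists_superset_nonempty_ncard_le {α : Type*} [Nonempty α] {s : Set α}
    (hs : s.Finite) : ∃ t, s ⊆ t ∧ t.Nonempty ∧ t.Finite ∧ t.ncard ≤ max 1 s.ncard := by
  rcases s.eq_empty_or_nonempty with rfl | hne
  · obtain ⟨a⟩ := ‹Nonempty α›
    exact ⟨{a}, Set.empty_subset _, Set.singleton_nonempty a, Set.finite_singleton a, by simp⟩
  · exact ⟨s, subset_rfl, hne, hs, le_max_right _ _⟩

theorem Set.ncard_range_le {ι β : Type*} [Fintype ι] (f : ι → β) :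
    (Set.range f).ncard ≤ Fintype.card ι :=
  (Finite.card_range_le f).trans_eq Nat.card_eq_fintype_card

namespace FirstOrder.Language

variable {L : Language.{v, w}} {M : Type*} [L.Structure M]

theorem BoundedFormula.IsUniversal.allsAbove {α : Type*} {k : ℕ} :
    ∀ {n : ℕ} {φ : L.BoundedFormula α (k + n)}, φ.IsUniversal →
      (BoundedFormula.allsAbove φ).IsUniversal
  | 0, _, hφ => hφ
  | n + 1, φ, hφ => IsUniversal.allsAbove (n := n) (φ := φ.all) hφ.all

theorem Substructure.realize_exs_of_isUniversal {m : ℕ} {ψ : L.BoundedFormula Empty m}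
    (hψ : ψ.IsUniversal) (S : L.Substructure M) {xs : Fin m → M} (hxs : ∀ i, xs i ∈ S)
    (h : ψ.Realize default xs) : S ⊨ ψ.exs := by
  rw [Sentence.Realize, BoundedFormula.realize_exs]
  refine ⟨fun i => ⟨xs i, hxs i⟩, hψ.realize_embedding S.subtype ?_⟩
  rwa [Subsingleton.elim (S.subtype ∘ default) default]

def Substructure.ofRangeConstantMapSubset (hL : ∀ n : ℕ, IsEmpty (L.Functions (n + 1)))
    {s : Set M} (hs : Set.range (constantMap : L.Constants → M) ⊆ s) : L.Substructure M where
  carrier := s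
  fun_mem {k} f x _ := by
    cases k with
    | zero => exact hs ⟨f, congrArg (Structure.funMap f) (Subsingleton.elim _ _)⟩
    | succ k => exact (hL k).elim f

end FirstOrder.Language

/-- Small-model property for Bernays–Schönfinkel sentences: every
(nonempty) model `𝔄` of `∃x₁…∃x_m ∀y₁…∀y_n φ` (with `φ` quantifier-free, over a language
with only relation and constant symbols, with `c` constant symbols) has a finite
substructure `𝔄′` with at most `max 1 (m + c)` elements which contains all constants and
is again a model; the inclusion of `𝔄′` into `𝔄` is a homomorphism. -/
theorem bernaysSchoenfinkel_small_submodel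
    (L : FirstOrder.Language.{v, w})
    (hL : ∀ n : ℕ, IsEmpty (L.Functions (n + 1)))
    [Fintype L.Constants]
    (m n : ℕ) (φ : L.BoundedFormula Empty (m + n)) (hφ : φ.IsQF)
    (A : Type u) (SA : L.Structure A) (hA : Nonempty A)
    (hmod : A ⊨ (BoundedFormula.allsAbove φ).exs) :
    ∃ S : L.Substructure A,
      (S : Set A).Nonempty ∧
      (S : Set A).Finite ∧
      (S : Set A).ncard ≤ max 1 (m + Fintype.card L.Constants) ∧
      (∀ c : L.Constants, Structure.funMap c (fun i : Fin 0 => i.elim0) ∈ S) ∧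
      (↥S) ⊨ (BoundedFormula.allsAbove φ).exs ∧
      ∃ h : (↥S) →[L] A, ∀ x : ↥S, h x = (x : A) := by
  obtain ⟨xs, hxs⟩ := BoundedFormula.realize_exs.mp hmod
  obtain ⟨T, hT, hne, hfin, hcard⟩ := ((Set.finite_range xs).union
    (Set.finite_range (constantMap : L.Constants → A))).exists_superset_nonempty_ncard_le
  have hconst : Set.range (constantMap : L.Constants → A) ⊆ T := Set.subset_union_right.trans hT
  have hsize : (Set.range xs ∪ Set.range (constantMap : L.Constants → A)).ncard ≤
      m + Fintype.card L.Constants := by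
    grw [Set.ncard_union_le, Set.ncard_range_le, Set.ncard_range_le, Fintype.card_fin]
  let S := Substructure.ofRangeConstantMapSubset hL hconst
  refine ⟨S, hne, hfin, hcard.trans (max_le_max_left 1 hsize), fun c => ?_, ?_,
    S.subtype.toHom, fun _ => rfl⟩
  · exact hconst ⟨c, congrArg (Structure.funMap c) (Subsingleton.elim _ _)⟩
  · exact S.realize_exs_of_isUniversal hφ.isUniversal.allsAbove
      (fun i => hT (Or.inl ⟨i, rfl⟩)) hxs
end

section
/- Let B be a set with two binary relations H_B and V_B satisfying the grid conditions. Then for every b ∈ B there is a map h : ℕ×ℕ → B with h(0,0) = b such that H_B(h(k,ℓ), h(k+1,ℓ)) and V_B(h(k,ℓ), h(k,ℓ+1)) hold for all k, ℓ ∈ ℕ; that is, there is a homomorphism from the grid 𝔄_{ℕ×ℕ} to B sending the origin (0,0) to b. -/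
/-!
Choose successor maps `f` and `g` with `H x (f x)` and `V x (g x)`, and send `(k, ℓ)` to
`g^[ℓ] (f^[k] b)`: walk `k` steps right along row `0`, then `ℓ` steps up. Vertical edges hold by
the choice of `g`. The third grid condition says precisely that `g` maps `H`-edges to `H`-edges,
so the horizontal edges of row `0`, given by the choice of `f`, propagate to every row.
-/

theorem Function.iterate_rel_of_map_rel {α : Type*} {r : α → α → Prop} {g : α → α}
    (hg : ∀ x y, r x y → r (g x) (g y)) {x y : α} (hxy : r x y) (n : ℕ) :
    r (g^[n] x) (g^[n] y) := by
  induction n with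
  | zero => exact hxy
  | succ n ih => simpa only [Function.iterate_succ_apply'] using hg _ _ ih

theorem exists_grid_hom_of_successor_maps {B : Type*} {H V : B → B → Prop} {f g : B → B}
    (hf : ∀ x, H x (f x)) (hg : ∀ x, V x (g x)) (hgH : ∀ x y, H x y → H (g x) (g y)) (b : B) :
    ∃ h : ℕ × ℕ → B, h (0, 0) = b ∧
      (∀ k ℓ : ℕ, H (h (k, ℓ)) (h (k + 1, ℓ))) ∧
      (∀ k ℓ : ℕ, V (h (k, ℓ)) (h (k, ℓ + 1))) := by
  refine ⟨fun p => g^[p.2] (f^[p.1] b), rfl, fun k ℓ => ?_, fun k ℓ => ?_⟩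
  · have hrow : H (f^[k] b) (f^[k + 1] b) := by
      rw [Function.iterate_succ_apply']
      exact hf _
    exact Function.iterate_rel_of_map_rel hgH hrow ℓ
  · simpa only [Function.iterate_succ_apply'] using hg (g^[ℓ] (f^[k] b))

/-- If `(B, H, V)` satisfies the grid conditions, then for every
`b ∈ B` there is a homomorphism from the grid `ℕ × ℕ` to `B` sending the origin to `b`. -/
theorem grid_hom_into_gridlike_structure {B : Type*} (H V : B → B → Prop)
    (h1 : ∀ x : B, ∃ y, H x y) (h2 : ∀ x : B, ∃ y, V x y)
    (h3 : ∀ x y z v : B, H x y → V x z → V y v → H z v) (b : B) :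
    ∃ h : ℕ × ℕ → B, h (0, 0) = b ∧
      (∀ k ℓ : ℕ, H (h (k, ℓ)) (h (k + 1, ℓ))) ∧
      (∀ k ℓ : ℕ, V (h (k, ℓ)) (h (k, ℓ + 1))) := by
  choose f hf using h1
  choose g hg using h2
  exact exists_grid_hom_of_successor_maps hf hg (fun x y hxy => h3 _ _ _ _ hxy (hg x) (hg y)) b
end

section
/- Let D be a set with binary relations H_D, V_D ⊆ D × D (a domino system without margin constraints). Suppose some set B with binary relations H_B, V_B satisfies the grid conditions and admits a map g : B → D with H_B(x,y) ⟹ (g x, g y) ∈ H_D and V_B(x,y) ⟹ (g x, g y) ∈ V_D. Then there exists a D-tiling of ℕ×ℕ, i.e., a map t : ℕ×ℕ → D such that (t(k,ℓ), t(k+1,ℓ)) ∈ H_D and (t(k,ℓ), t(k,ℓ+1)) ∈ V_D for all k, ℓ ∈ ℕ. -/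
/-!
Choose successor functions `h` and `v` for `H_B` and `V_B` and a point `b₀`. Condition (iii)
says that `v` maps `H_B`-edges to `H_B`-edges, so `(k, ℓ) ↦ v^ℓ (h^k b₀)` tiles `ℕ × ℕ` with `B`,
and composing with the homomorphism `g` gives a `D`-tiling.
-/

def IsTiling {α : Type*} (H V : α → α → Prop) (t : ℕ × ℕ → α) : Prop :=
  (∀ k ℓ : ℕ, H (t (k, ℓ)) (t (k + 1, ℓ))) ∧ (∀ k ℓ : ℕ, V (t (k, ℓ)) (t (k, ℓ + 1)))

theorem IsTiling.comp {α β : Type*} {Hα Vα : α → α → Prop} {Hβ Vβ : β → β → Prop}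
    {t : ℕ × ℕ → α} (ht : IsTiling Hα Vα t) (g : α → β)
    (hH : ∀ x y, Hα x y → Hβ (g x) (g y)) (hV : ∀ x y, Vα x y → Vβ (g x) (g y)) :
    IsTiling Hβ Vβ (g ∘ t) :=
  ⟨fun k ℓ => hH _ _ (ht.1 k ℓ), fun k ℓ => hV _ _ (ht.2 k ℓ)⟩

theorem Function.iterate_map_rel {α : Type*} {R : α → α → Prop} {f : α → α}
    (hf : ∀ x y, R x y → R (f x) (f y)) (n : ℕ) {x y : α} (h : R x y) :
    R (f^[n] x) (f^[n] y) := by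
  induction n generalizing x y with
  | zero => exact h
  | succ n ih => exact ih (hf x y h)

theorem Function.rel_iterate_succ {α : Type*} {R : α → α → Prop} {f : α → α}
    (hf : ∀ x, R x (f x)) (n : ℕ) (x : α) : R (f^[n] x) (f^[n + 1] x) := by
  rw [Function.iterate_succ_apply']
  exact hf _

theorem exists_isTiling_of_grid {B : Type*} [Nonempty B] (HB VB : B → B → Prop)
    (h1 : ∀ x : B, ∃ y, HB x y) (h2 : ∀ x : B, ∃ y, VB x y)
    (h3 : ∀ x y z v : B, HB x y → VB x z → VB y v → HB z v) :
    ∃ t : ℕ × ℕ → B, IsTiling HB VB t := by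
  choose nextH hH using h1
  choose nextV hV using h2
  obtain ⟨b₀⟩ := ‹Nonempty B›
  have nextV_map_HB : ∀ x y, HB x y → HB (nextV x) (nextV y) :=
    fun x y hxy => h3 x y _ _ hxy (hV x) (hV y)
  exact ⟨fun p => nextV^[p.2] (nextH^[p.1] b₀),
    fun k ℓ => Function.iterate_map_rel nextV_map_HB ℓ (Function.rel_iterate_succ hH k b₀),
    fun k ℓ => Function.rel_iterate_succ hV ℓ _⟩

/-- If some nonempty structure `(B, H_B, V_B)` satisfies the grid
conditions and maps homomorphically into a domino system `(D, H_D, V_D)`, then there is a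
`D`-tiling of `ℕ × ℕ`. -/
theorem tiling_of_hom_from_gridlike_structure {D B : Type*}
    (HD VD : D → D → Prop) (HB VB : B → B → Prop) [Nonempty B]
    (h1 : ∀ x : B, ∃ y, HB x y) (h2 : ∀ x : B, ∃ y, VB x y)
    (h3 : ∀ x y z v : B, HB x y → VB x z → VB y v → HB z v)
    (g : B → D)
    (hg1 : ∀ x y : B, HB x y → HD (g x) (g y))
    (hg2 : ∀ x y : B, VB x y → VD (g x) (g y)) :
    ∃ t : ℕ × ℕ → D,
      (∀ k ℓ : ℕ, HD (t (k, ℓ)) (t (k + 1, ℓ))) ∧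
      (∀ k ℓ : ℕ, VD (t (k, ℓ)) (t (k, ℓ + 1))) := by
  obtain ⟨t, ht⟩ := exists_isTiling_of_grid HB VB h1 h2 h3
  exact ⟨g ∘ t, ht.comp g hg1 hg2⟩
end

section
/- Let 𝔊 be a finite set with a binary relation E_𝔊. Define the class C of all structures 𝔅 (sets with a binary relation E_𝔅) satisfying: if there exists an E-preserving map K₃ → 𝔅 then there exists an E-preserving map 𝔊 → 𝔅. Then C is closed under homomorphisms (𝔅 ∈ C together with an E-preserving map 𝔅 → 𝔅′ implies 𝔅′ ∈ C) if and only if 𝔊 is 3-colorable, i.e., there exists an E-preserving map 𝔊 → K₃. -/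
/-!
If `c : 𝔊 → K₃`, then composing with `c` turns every copy of `K₃` into a copy of `𝔊`, so every
structure lies in `C`. Conversely, the vertex set of `K₃` with no edges at all contains no copy of
`K₃` and hence lies in `C` vacuously; the identity is a homomorphism from it onto `K₃` itself,
so closure under homomorphisms puts `K₃` in `C`, and `K₃ → K₃` then yields `𝔊 → K₃`.
-/

open Function

section

variable {α β : Type*}

theorem RelHom.nonempty_iff_exists {r : α → α → Prop} {s : β → β → Prop} :
    Nonempty (r →r s) ↔ ∃ f : α → β, ∀ x y, r x y → s (f x) (f y) :=
  ⟨fun ⟨f⟩ => ⟨f, fun _ _ => f.map_rel⟩, fun ⟨f, hf⟩ => ⟨⟨f, hf _ _⟩⟩⟩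

def Function.Injective.neRelHom {f : α → β} (hf : Injective f) :
    ((· ≠ ·) : α → α → Prop) →r ((· ≠ ·) : β → β → Prop) :=
  ⟨f, hf.ne⟩

def RelHom.idOfEmptyRelation (r : α → α → Prop) : (emptyRelation : α → α → Prop) →r r :=
  ⟨id, False.elim⟩

theorem isEmpty_relHom_ne_emptyRelation [Nontrivial α] :
    IsEmpty (((· ≠ ·) : α → α → Prop) →r (emptyRelation : β → β → Prop)) := by
  obtain ⟨x, y, hxy⟩ := exists_pair_ne α
  exact ⟨fun f => f.map_rel hxy⟩

end

theorem threeColorability_iff_homclosed_general {G : Type u} (E : G → G → Prop) :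
    (∀ (B : Type u) (EB : B → B → Prop),
        ((∃ f : Fin 3 → B, ∀ i j : Fin 3, i ≠ j → EB (f i) (f j)) →
            ∃ g : G → B, ∀ x y : G, E x y → EB (g x) (g y)) →
          ∀ (B' : Type u) (EB' : B' → B' → Prop),
            (∃ h : B → B', ∀ x y : B, EB x y → EB' (h x) (h y)) →
              ((∃ f : Fin 3 → B', ∀ i j : Fin 3, i ≠ j → EB' (f i) (f j)) →
                ∃ g : G → B', ∀ x y : G, E x y → EB' (g x) (g y))) ↔
      ∃ c : G → Fin 3, ∀ x y : G, E x y → c x ≠ c y := by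
  simp only [← RelHom.nonempty_iff_exists]
  constructor
  · intro hClosed
    obtain ⟨φ⟩ := hClosed (ULift (Fin 3)) emptyRelation
      (fun ⟨f⟩ => (isEmpty_relHom_ne_emptyRelation.false f).elim) (ULift (Fin 3)) (· ≠ ·)
      ⟨RelHom.idOfEmptyRelation _⟩ ⟨ULift.up_injective.neRelHom⟩
    exact ⟨ULift.down_injective.neRelHom.comp φ⟩
  · rintro ⟨c⟩ B EB - B' EB' - ⟨f⟩
    exact ⟨f.comp c⟩

/-- For a finite graph `(G, E)`, the class
`C = {𝔅 : (K₃ → 𝔅) → (𝔊 → 𝔅)}` (of structures in which a homomorphic copy of `K₃`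
forces a homomorphic copy of `𝔊`) is closed under homomorphisms iff `𝔊` is
3-colorable. -/
theorem threeColorability_iff_homclosed {G : Type u} [Finite G] (E : G → G → Prop) :
    (∀ (B : Type u) (EB : B → B → Prop),
        ((∃ f : Fin 3 → B, ∀ i j : Fin 3, i ≠ j → EB (f i) (f j)) →
            ∃ g : G → B, ∀ x y : G, E x y → EB (g x) (g y)) →
          ∀ (B' : Type u) (EB' : B' → B' → Prop),
            (∃ h : B → B', ∀ x y : B, EB x y → EB' (h x) (h y)) →
              ((∃ f : Fin 3 → B', ∀ i j : Fin 3, i ≠ j → EB' (f i) (f j)) →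
                ∃ g : G → B', ∀ x y : G, E x y → EB' (g x) (g y))) ↔
      ∃ c : G → Fin 3, ∀ x y : G, E x y → c x ≠ c y :=
  threeColorability_iff_homclosed_general E
end

section
/- Let S = (C₁, …, C_n) be a 3SAT instance over propositional variables p₁, …, p_m. Then the propositional formula ⋀_{1≤i≤n} ⋁ C_i is satisfiable if and only if there exist a finite σ₃-structure 𝔅 satisfying the Φ_3SAT conditions and a homomorphism from 𝔅 to 𝔄_S; that is, if and only if 𝔄_S ∈ homcl(FinMod(Φ_3SAT)). -/
/-!
A satisfying assignment `α` gives the substructure of `𝔄_S` that keeps only the literals made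
true by `α`; it satisfies `Φ_3SAT` and maps into `𝔄_S` by the identity. Conversely, walking along
`Next` from a `First` element of a model `𝔅` reaches, for every clause index `i`, a `CLst` element
mapped to `aᵢ`, whose `Lit`-witness is mapped to a literal of `Cᵢ`. Since `Cmp` holds between all
`Sel` elements and `𝔄_S` has no `Cmp` edge between complementary literals, the literals hit by
`Sel` are pairwise consistent, so some assignment makes all of them true.
-/

structure Sigma3Structure (B : Type*) where
  First : B → Prop
  CLst : B → Prop
  Nil : B → Prop
  Sel : B → Prop
  Next : B → B → Prop
  Lit : B → B → Prop
  Cmp : B → B → Prop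

namespace Sigma3Structure

variable {A B : Type*}

structure IsPhi3SAT (𝔅 : Sigma3Structure B) : Prop where
  exists_first : ∃ x, 𝔅.First x
  cLst_of_first : ∀ x, 𝔅.First x → 𝔅.CLst x
  exists_next : ∀ x, 𝔅.CLst x → ∃ y, 𝔅.Next x y ∧ (𝔅.CLst y ∨ 𝔅.Nil y)
  exists_lit : ∀ x, 𝔅.CLst x → ∃ y, 𝔅.Lit x y ∧ 𝔅.Sel y
  cmp : ∀ x y, 𝔅.Sel x → 𝔅.Sel y → 𝔅.Cmp x y

structure IsHom (𝔅 : Sigma3Structure B) (𝔄 : Sigma3Structure A) (h : B → A) : Prop where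
  first : ∀ x, 𝔅.First x → 𝔄.First (h x)
  cLst : ∀ x, 𝔅.CLst x → 𝔄.CLst (h x)
  nil : ∀ x, 𝔅.Nil x → 𝔄.Nil (h x)
  sel : ∀ x, 𝔅.Sel x → 𝔄.Sel (h x)
  next : ∀ x y, 𝔅.Next x y → 𝔄.Next (h x) (h y)
  lit : ∀ x y, 𝔅.Lit x y → 𝔄.Lit (h x) (h y)
  cmp : ∀ x y, 𝔅.Cmp x y → 𝔄.Cmp (h x) (h y)

end Sigma3Structure

theorem exists_assignment_of_consistent {V : Type*} (L : Set (V × Bool))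
    (hL : ∀ l ∈ L, ∀ l' ∈ L, l.1 = l'.1 → l.2 = l'.2) :
    ∃ α : V → Bool, ∀ l ∈ L, α l.1 = l.2 := by
  classical
  refine ⟨fun v => decide ((v, true) ∈ L), ?_⟩
  rintro ⟨v, (_ | _)⟩ hl
  · simpa using fun hv : (v, true) ∈ L => Bool.false_ne_true (hL _ hl _ hv rfl)
  · simpa using hl

namespace ThreeSat

open Sigma3Structure

variable {n m : ℕ} (S : Fin n → Finset (Fin m × Bool))

def Satisfies (α : Fin m → Bool) : Prop :=
  ∀ i : Fin n, ∃ l ∈ S i, α l.1 = l.2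

/-- The structure `𝔄_S`: `Sum.inl i` is `a_{i+1}`, and `Sum.inr (j, b)` is `b_{j+1}` if `b`
and `b′_{j+1}` otherwise. -/
def structureOf : Sigma3Structure (Fin (n + 1) ⊕ (Fin m × Bool)) where
  First x := x = Sum.inl 0
  CLst x := ∃ i : Fin (n + 1), x = Sum.inl i ∧ (i : ℕ) < n
  Nil x := ∃ i : Fin (n + 1), x = Sum.inl i ∧ (i : ℕ) = n
  Sel x := ∃ l : Fin m × Bool, x = Sum.inr l
  Next x y := ∃ i j : Fin (n + 1), x = Sum.inl i ∧ y = Sum.inl j ∧ (j : ℕ) = (i : ℕ) + 1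
  Lit x y := ∃ (i : Fin (n + 1)) (hi : (i : ℕ) < n) (l : Fin m × Bool),
    x = Sum.inl i ∧ y = Sum.inr l ∧ l ∈ S ⟨(i : ℕ), hi⟩
  Cmp x y := ∃ l l' : Fin m × Bool, x = Sum.inr l ∧ y = Sum.inr l' ∧ (l.1 ≠ l'.1 ∨ l.2 = l'.2)

def trueLiteralSubstructure (α : Fin m → Bool) : Sigma3Structure (Fin (n + 1) ⊕ (Fin m × Bool)) :=
  let Sel x := ∃ l : Fin m × Bool, x = Sum.inr l ∧ α l.1 = l.2
  { structureOf S with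
    Sel := Sel
    Lit := fun x y => (structureOf S).Lit x y ∧ Sel y
    Cmp := fun x y => Sel x ∧ Sel y }

variable {S}

theorem isPhi3SAT_trueLiteralSubstructure (hn : 0 < n) {α : Fin m → Bool} (hα : Satisfies S α) :
    (trueLiteralSubstructure S α).IsPhi3SAT where
  exists_first := ⟨Sum.inl 0, rfl⟩
  cLst_of_first := by
    rintro x rfl
    exact ⟨0, rfl, hn⟩
  exists_next := by
    rintro x ⟨i, rfl, hi⟩
    let j : Fin (n + 1) := ⟨i + 1, by omega⟩
    refine ⟨Sum.inl j, ⟨i, j, rfl, rfl, rfl⟩, ?_⟩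
    rcases (Nat.succ_le_of_lt hi).lt_or_eq with hj | hj
    exacts [Or.inl ⟨j, rfl, hj⟩, Or.inr ⟨j, rfl, hj⟩]
  exists_lit := by
    rintro x ⟨i, rfl, hi⟩
    obtain ⟨l, hl, hαl⟩ := hα ⟨i, hi⟩
    exact ⟨Sum.inr l, ⟨⟨i, hi, l, rfl, rfl, hl⟩, l, rfl, hαl⟩, l, rfl, hαl⟩
  cmp _ _ hx hy := ⟨hx, hy⟩

theorem isHom_id_trueLiteralSubstructure (α : Fin m → Bool) :
    (trueLiteralSubstructure S α).IsHom (structureOf S) id where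
  first _ := id
  cLst _ := id
  nil _ := id
  sel := by
    rintro x ⟨l, rfl, -⟩
    exact ⟨l, rfl⟩
  next _ _ := id
  lit _ _ := And.left
  cmp := by
    rintro x y ⟨⟨l, rfl, hl⟩, ⟨l', rfl, hl'⟩⟩
    refine ⟨l, l', rfl, rfl, or_iff_not_imp_left.mpr fun h => ?_⟩
    rw [← hl, ← hl', not_not.mp h]

variable {B : Type*} {𝔅 : Sigma3Structure B} {h : B → Fin (n + 1) ⊕ (Fin m × Bool)}

theorem exists_cLst_map_eq (hΦ : 𝔅.IsPhi3SAT) (hh : 𝔅.IsHom (structureOf S) h) :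
    ∀ k (hk : k < n), ∃ x, 𝔅.CLst x ∧ h x = Sum.inl ⟨k, by omega⟩ := by
  intro k
  induction k with
  | zero =>
    obtain ⟨x, hx⟩ := hΦ.exists_first
    exact fun _ => ⟨x, hΦ.cLst_of_first x hx, hh.first x hx⟩
  | succ k ih =>
    intro hk
    obtain ⟨x, hx, hxk⟩ := ih (by omega)
    obtain ⟨y, hxy, hy⟩ := hΦ.exists_next x hx
    obtain ⟨i, j, hxi, hyj, hji⟩ := hh.next x y hxy
    obtain rfl : i = ⟨k, _⟩ := Sum.inl_injective (hxi.symm.trans hxk)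
    have hj : j = ⟨k + 1, by omega⟩ := Fin.ext hji
    rcases hy with hy | hy
    · exact ⟨y, hy, hyj.trans (congrArg Sum.inl hj)⟩
    · obtain ⟨j', hyj', hj'⟩ := hh.nil y hy
      obtain rfl : j = j' := Sum.inl_injective (hyj.symm.trans hyj')
      simp only [hj] at hj'
      omega

variable (𝔅 h) in
def selLiterals : Set (Fin m × Bool) :=
  {l | ∃ x, 𝔅.Sel x ∧ h x = Sum.inr l}

theorem selLiterals_consistent (hΦ : 𝔅.IsPhi3SAT) (hh : 𝔅.IsHom (structureOf S) h) :
    ∀ l ∈ selLiterals 𝔅 h, ∀ l' ∈ selLiterals 𝔅 h, l.1 = l'.1 → l.2 = l'.2 := by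
  rintro l ⟨x, hx, hxl⟩ l' ⟨y, hy, hyl'⟩ hll'
  obtain ⟨k, k', hxk, hyk', hkk'⟩ := hh.cmp x y (hΦ.cmp x y hx hy)
  obtain rfl : k = l := Sum.inr_injective (hxk.symm.trans hxl)
  obtain rfl : k' = l' := Sum.inr_injective (hyk'.symm.trans hyl')
  exact hkk'.resolve_left (not_not.mpr hll')

theorem exists_satisfies_of_isHom (hΦ : 𝔅.IsPhi3SAT) (hh : 𝔅.IsHom (structureOf S) h) :
    ∃ α, Satisfies S α := by
  obtain ⟨α, hα⟩ := exists_assignment_of_consistent _ (selLiterals_consistent hΦ hh)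
  refine ⟨α, fun i => ?_⟩
  obtain ⟨x, hx, hxi⟩ := exists_cLst_map_eq hΦ hh i i.2
  obtain ⟨y, hxy, hy⟩ := hΦ.exists_lit x hx
  obtain ⟨i', hi', l, hxi', hyl, hl⟩ := hh.lit x y hxy
  obtain rfl : i' = ⟨i, _⟩ := Sum.inl_injective (hxi'.symm.trans hxi)
  exact ⟨l, hl, hα l ⟨y, hy, hyl⟩⟩

theorem exists_satisfies_iff_exists_hom (hn : 0 < n) :
    (∃ α, Satisfies S α) ↔ ∃ (B : Type) (_ : Finite B) (𝔅 : Sigma3Structure B)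
      (h : B → Fin (n + 1) ⊕ (Fin m × Bool)), 𝔅.IsPhi3SAT ∧ 𝔅.IsHom (structureOf S) h :=
  ⟨fun ⟨α, hα⟩ => ⟨_, inferInstance, trueLiteralSubstructure S α, id,
      isPhi3SAT_trueLiteralSubstructure hn hα, isHom_id_trueLiteralSubstructure α⟩,
    fun ⟨_, _, _, _, hΦ, hh⟩ => exists_satisfies_of_isHom hΦ hh⟩

end ThreeSat

theorem threeSat_satisfiable_iff_in_homclosure_general
    (n m : ℕ) (hn : 0 < n) (S : Fin n → Finset (Fin m × Bool)) :
    (∃ α : Fin m → Bool, ∀ i : Fin n, ∃ l ∈ S i, α l.1 = l.2) ↔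
      ∃ (B : Type) (_ : Finite B)
        (Fi CL Ni Se : B → Prop) (Ne Li Cm : B → B → Prop)
        (h : B → (Fin (n + 1) ⊕ (Fin m × Bool))),
        -- the Φ_3SAT conditions on 𝔅
        (∃ x, Fi x) ∧
        (∀ x, Fi x → CL x) ∧
        (∀ x, CL x → ∃ y, Ne x y ∧ (CL y ∨ Ni y)) ∧
        (∀ x, CL x → ∃ y, Li x y ∧ Se y) ∧
        (∀ x y, Se x → Se y → Cm x y) ∧
        -- `h` is a homomorphism from 𝔅 into 𝔄_S
        (∀ x, Fi x → h x = Sum.inl 0) ∧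
        (∀ x, CL x → ∃ i : Fin (n + 1), h x = Sum.inl i ∧ (i : ℕ) < n) ∧
        (∀ x, Ni x → ∃ i : Fin (n + 1), h x = Sum.inl i ∧ (i : ℕ) = n) ∧
        (∀ x, Se x → ∃ l : Fin m × Bool, h x = Sum.inr l) ∧
        (∀ x y, Ne x y → ∃ i j : Fin (n + 1),
            h x = Sum.inl i ∧ h y = Sum.inl j ∧ (j : ℕ) = (i : ℕ) + 1) ∧
        (∀ x y, Li x y → ∃ (i : Fin (n + 1)) (hi : (i : ℕ) < n) (l : Fin m × Bool),
            h x = Sum.inl i ∧ h y = Sum.inr l ∧ l ∈ S ⟨(i : ℕ), hi⟩) ∧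
        (∀ x y, Cm x y → ∃ l l' : Fin m × Bool,
            h x = Sum.inr l ∧ h y = Sum.inr l' ∧ (l.1 ≠ l'.1 ∨ l.2 = l'.2)) := by
  refine (ThreeSat.exists_satisfies_iff_exists_hom hn).trans ⟨?_, ?_⟩
  · rintro ⟨B, hB, ⟨Fi, CL, Ni, Se, Ne, Li, Cm⟩, h, ⟨hΦ₁, hΦ₂, hΦ₃, hΦ₄, hΦ₅⟩,
      ⟨hh₁, hh₂, hh₃, hh₄, hh₅, hh₆, hh₇⟩⟩
    exact ⟨B, hB, Fi, CL, Ni, Se, Ne, Li, Cm, h, hΦ₁, hΦ₂, hΦ₃, hΦ₄, hΦ₅,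
      hh₁, hh₂, hh₃, hh₄, hh₅, hh₆, hh₇⟩
  · rintro ⟨B, hB, Fi, CL, Ni, Se, Ne, Li, Cm, h, hΦ₁, hΦ₂, hΦ₃, hΦ₄, hΦ₅,
      hh₁, hh₂, hh₃, hh₄, hh₅, hh₆, hh₇⟩
    exact ⟨B, hB, ⟨Fi, CL, Ni, Se, Ne, Li, Cm⟩, h, ⟨hΦ₁, hΦ₂, hΦ₃, hΦ₄, hΦ₅⟩,
      ⟨hh₁, hh₂, hh₃, hh₄, hh₅, hh₆, hh₇⟩⟩

/-- A 3SAT instance `S = (C₁, …, C_n)` over variables `p₁, …, p_m`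
(each clause a set of exactly 3 literals, a literal being a pair of a variable and a
polarity) is satisfiable iff the structure `𝔄_S` lies in the homomorphism closure of the
finite models of `Φ_3SAT`.

The domain of `𝔄_S` is `Fin (n+1) ⊕ (Fin m × Bool)`, where `Sum.inl i` represents
`a_{i+1}` and `Sum.inr (j, tt)`, `Sum.inr (j, ff)` represent `b_{j+1}`, `b′_{j+1}`.
The right-hand side asserts the existence of a finite σ₃-structure `𝔅` satisfying the
`Φ_3SAT` conditions together with a map `h : 𝔅 → 𝔄_S` preserving all seven relations
(the relations of `𝔄_S` are written out explicitly in the preservation conditions). -/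
theorem threeSat_satisfiable_iff_in_homclosure
    (n m : ℕ) (hn : 0 < n) (S : Fin n → Finset (Fin m × Bool))
    (hS3 : ∀ i : Fin n, (S i).card = 3) :
    (∃ α : Fin m → Bool, ∀ i : Fin n, ∃ l ∈ S i, α l.1 = l.2) ↔
      ∃ (B : Type) (_ : Finite B)
        (Fi CL Ni Se : B → Prop) (Ne Li Cm : B → B → Prop)
        (h : B → (Fin (n + 1) ⊕ (Fin m × Bool))),
        -- the Φ_3SAT conditions on 𝔅
        (∃ x, Fi x) ∧
        (∀ x, Fi x → CL x) ∧
        (∀ x, CL x → ∃ y, Ne x y ∧ (CL y ∨ Ni y)) ∧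
        (∀ x, CL x → ∃ y, Li x y ∧ Se y) ∧
        (∀ x y, Se x → Se y → Cm x y) ∧
        -- `h` is a homomorphism from 𝔅 into 𝔄_S
        (∀ x, Fi x → h x = Sum.inl 0) ∧
        (∀ x, CL x → ∃ i : Fin (n + 1), h x = Sum.inl i ∧ (i : ℕ) < n) ∧
        (∀ x, Ni x → ∃ i : Fin (n + 1), h x = Sum.inl i ∧ (i : ℕ) = n) ∧
        (∀ x, Se x → ∃ l : Fin m × Bool, h x = Sum.inr l) ∧
        (∀ x y, Ne x y → ∃ i j : Fin (n + 1),
            h x = Sum.inl i ∧ h y = Sum.inl j ∧ (j : ℕ) = (i : ℕ) + 1) ∧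
        (∀ x y, Li x y → ∃ (i : Fin (n + 1)) (hi : (i : ℕ) < n) (l : Fin m × Bool),
            h x = Sum.inl i ∧ h y = Sum.inr l ∧ l ∈ S ⟨(i : ℕ), hi⟩) ∧
        (∀ x y, Cm x y → ∃ l l' : Fin m × Bool,
            h x = Sum.inr l ∧ h y = Sum.inr l' ∧ (l.1 ≠ l'.1 ∨ l.2 = l'.2)) :=
  threeSat_satisfiable_iff_in_homclosure_general n m hn S
end
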